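/- arXiv:1604.01380 — 3 statements merged into one kernel-verified Lean document; each statement's English description precedes it below -/
import Mathlib

section
/- The identity Σ_{k=0}^∞ (k + 2μθ_k)^2 y^k/γ_μ(k) = y^2 e_μ(y) + y(e_μ(y) + 2μ e_μ(-y)) holds for all y ≥ 0 and μ ≥ 0. -/
noncomputable section

/-- θ_k = 0 if k even, 1 if k odd. -/
def theta (k : ℕ) : ℝ := if Even k then 0 else 1

/-- Dunkl coefficients γ_μ(n). -/
def gammaD (mu : ℝ) (n : ℕ) : ℝ :=
  if Even n then
    2 ^ n * (Nat.factorial (n / 2)) * Real.Gamma ((n / 2 : ℕ) + mu + 1 / 2) / Real.Gamma (mu + 1 / 2)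
  else
    2 ^ n * (Nat.factorial (n / 2)) * Real.Gamma ((n / 2 : ℕ) + mu + 3 / 2) / Real.Gamma (mu + 1 / 2)

/-- Dunkl exponential e_μ(x) = Σ xⁿ/γ_μ(n). -/
def eD (mu x : ℝ) : ℝ := ∑' n : ℕ, x ^ n / gammaD mu n

/-- r_n(x) = x - 1/(2n). -/
def rn (n : ℕ) (x : ℝ) : ℝ := x - 1 / (2 * n)

/-- Modified Dunkl Szász–Mirakjan–Kantorovich operator K_n. -/
def Kn (mu : ℝ) (n : ℕ) (f : ℝ → ℝ) (x : ℝ) : ℝ :=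
  (n / eD mu (n * rn n x)) * ∑' k : ℕ, (n * rn n x) ^ k / gammaD mu k *
    ∫ t in (((k : ℝ) + 2 * mu * theta k) / n)..(((k : ℝ) + 1 + 2 * mu * theta k) / n), f t

/-- Stancu-type modified Dunkl Szász–Kantorovich operator K_n^*. -/
def KnStar (mu a b : ℝ) (n : ℕ) (f : ℝ → ℝ) (x : ℝ) : ℝ :=
  (n / eD mu (n * rn n x)) * ∑' k : ℕ, (n * rn n x) ^ k / gammaD mu k *
    ∫ t in (((k : ℝ) + 2 * mu * theta k) / n)..(((k : ℝ) + 1 + 2 * mu * theta k) / n),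
      f ((n * t + a) / (n + b))

/-- Dunkl Szász–Kantorovich–Stancu operator T_n^*. -/
def TnStar (mu a b : ℝ) (n : ℕ) (f : ℝ → ℝ) (x : ℝ) : ℝ :=
  (n / eD mu (n * x)) * ∑' k : ℕ, (n * x) ^ k / gammaD mu k *
    ∫ t in (((k : ℝ) + 2 * mu * theta k) / n)..(((k : ℝ) + 1 + 2 * mu * theta k) / n),
      f ((n * t + a) / (n + b))

/-- Modulus of continuity of f on [0,∞). -/
def modCont (f : ℝ → ℝ) (d : ℝ) : ℝ :=
  sSup {y | ∃ t s : ℝ, 0 ≤ t ∧ 0 ≤ s ∧ |t - s| ≤ d ∧ y = |f t - f s|}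

/-!
Write `a_k = k + 2μθ_k` and `w_k = y^k / γ_μ(k)`. The recursion `γ_μ(k+1) = a_{k+1} γ_μ(k)` gives
`a_{k+1} w_{k+1} = y w_k`, and since `θ_{k+1} = 1 - θ_k` we have
`a_{k+1} = a_k + 1 + 2μ(1 - 2θ_k)` with `(1 - 2θ_k) y^k = (-y)^k`. Hence
`a_{k+1}² w_{k+1} = y (a_k w_k + w_k + 2μ (-y)^k / γ_μ(k))`, and as `a_0 = 0` both moments are
obtained from `e_μ(±y)` by an index shift. Convergence for every real `y` follows from
`γ_μ(n) ≥ n!`.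
-/

open Nat

lemma theta_zero : theta 0 = 0 := by simp [theta]

lemma theta_succ (k : ℕ) : theta (k + 1) = 1 - theta k := by
  unfold theta
  by_cases h : Even k <;> simp [h, Nat.even_add_one]

lemma neg_pow_eq_one_sub_two_mul_theta_mul (y : ℝ) (k : ℕ) :
    (-y) ^ k = (1 - 2 * theta k) * y ^ k := by
  rcases Nat.even_or_odd k with hk | hk
  · simp [theta, hk, hk.neg_pow]
  · simp only [hk.neg_pow, theta, Nat.not_even_iff_odd.mpr hk, ↓reduceIte, mul_one]
    ring

lemma succ_add_two_mul_theta_pos {mu : ℝ} (hmu : -(1 / 2) < mu) (k : ℕ) :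
    0 < (k : ℝ) + 1 + 2 * mu * theta (k + 1) := by
  have hk : (0 : ℝ) ≤ k := k.cast_nonneg
  unfold theta
  split <;> linarith

lemma gammaD_zero {mu : ℝ} (hmu : -(1 / 2) < mu) : gammaD mu 0 = 1 := by
  have : Real.Gamma (mu + 1 / 2) ≠ 0 := (Real.Gamma_pos_of_pos (by linarith)).ne'
  simp only [gammaD, Even.zero, if_true, pow_zero, Nat.zero_div, factorial_zero, Nat.cast_zero,
    Nat.cast_one, one_mul, zero_add]
  exact div_self this

lemma gammaD_succ {mu : ℝ} (hmu : -(1 / 2) < mu) (n : ℕ) :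
    gammaD mu (n + 1) = ((n : ℝ) + 1 + 2 * mu * theta (n + 1)) * gammaD mu n := by
  rcases Nat.even_or_odd' n with ⟨m, rfl | rfl⟩
  · have hodd : ¬ Even (2 * m + 1) := by simp
    have hhalf : (2 * m + 1) / 2 = m := by omega
    have hpos : (m : ℝ) + mu + 1 / 2 ≠ 0 := by have := m.cast_nonneg (α := ℝ); linarith
    have hGamma := Real.Gamma_add_one hpos
    rw [show (m : ℝ) + mu + 1 / 2 + 1 = m + mu + 3 / 2 by ring] at hGamma
    simp only [gammaD, theta, hodd, even_two_mul, if_true, if_false, hhalf,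
      Nat.mul_div_cancel_left m two_pos, hGamma]
    push_cast
    ring
  · have heven : Even (2 * m + 1 + 1) := ⟨m + 1, by ring⟩
    have hodd : ¬ Even (2 * m + 1) := by simp
    have hhalf : (2 * m + 1 + 1) / 2 = m + 1 := by omega
    have hhalf' : (2 * m + 1) / 2 = m := by omega
    simp only [gammaD, theta, heven, hodd, if_true, if_false, hhalf, hhalf', Nat.factorial_succ]
    push_cast
    ring_nf

lemma factorial_le_gammaD {mu : ℝ} (hmu : 0 ≤ mu) (n : ℕ) : (n ! : ℝ) ≤ gammaD mu n := by
  have hmu' : -(1 / 2) < mu := by linarith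
  induction n with
  | zero => simp [gammaD_zero hmu']
  | succ n ih =>
    have htheta : 0 ≤ 2 * mu * theta (n + 1) := by unfold theta; split <;> positivity
    rw [gammaD_succ hmu', Nat.factorial_succ, Nat.cast_mul, Nat.cast_succ]
    exact mul_le_mul (by linarith) ih (by positivity) (by positivity)

lemma summable_pow_div_gammaD {mu : ℝ} (hmu : 0 ≤ mu) (y : ℝ) :
    Summable fun n : ℕ ↦ y ^ n / gammaD mu n := by
  refine .of_norm_bounded (Real.summable_pow_div_factorial |y|) fun n ↦ ?_
  have hfac : (0 : ℝ) < n ! := by positivity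
  rw [norm_div, norm_pow, Real.norm_eq_abs, Real.norm_eq_abs,
    abs_of_pos (hfac.trans_le (factorial_le_gammaD hmu n))]
  gcongr
  exact factorial_le_gammaD hmu n

lemma index_mul_pow_div_gammaD_succ {mu : ℝ} (hmu : -(1 / 2) < mu) (y : ℝ) (n : ℕ) :
    (((n + 1 : ℕ) : ℝ) + 2 * mu * theta (n + 1)) * y ^ (n + 1) / gammaD mu (n + 1)
      = y * (y ^ n / gammaD mu n) := by
  rw [gammaD_succ hmu, pow_succ, Nat.cast_succ, mul_div_mul_left _ _
    (succ_add_two_mul_theta_pos hmu n).ne']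
  ring

lemma index_sq_mul_pow_div_gammaD_succ {mu : ℝ} (hmu : -(1 / 2) < mu) (y : ℝ) (n : ℕ) :
    (((n + 1 : ℕ) : ℝ) + 2 * mu * theta (n + 1)) ^ 2 * y ^ (n + 1) / gammaD mu (n + 1)
      = y * (((n : ℝ) + 2 * mu * theta n) * y ^ n / gammaD mu n + y ^ n / gammaD mu n
        + 2 * mu * ((-y) ^ n / gammaD mu n)) := by
  calc _ = (((n + 1 : ℕ) : ℝ) + 2 * mu * theta (n + 1))
        * ((((n + 1 : ℕ) : ℝ) + 2 * mu * theta (n + 1)) * y ^ (n + 1) / gammaD mu (n + 1)) := by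
        ring
    _ = _ := by
      rw [index_mul_pow_div_gammaD_succ hmu, neg_pow_eq_one_sub_two_mul_theta_mul, theta_succ]
      push_cast
      ring

lemma hasSum_eD {mu : ℝ} (hmu : 0 ≤ mu) (y : ℝ) :
    HasSum (fun n : ℕ ↦ y ^ n / gammaD mu n) (eD mu y) :=
  (summable_pow_div_gammaD hmu y).hasSum

lemma hasSum_index_mul_pow_div_gammaD {mu : ℝ} (hmu : 0 ≤ mu) (y : ℝ) :
    HasSum (fun k : ℕ ↦ ((k : ℝ) + 2 * mu * theta k) * y ^ k / gammaD mu k) (y * eD mu y) := by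
  have hshift : HasSum (fun k : ℕ ↦ (((k + 1 : ℕ) : ℝ) + 2 * mu * theta (k + 1)) * y ^ (k + 1)
      / gammaD mu (k + 1)) (y * eD mu y) := by
    rw [funext (index_mul_pow_div_gammaD_succ (by linarith) y)]
    exact (hasSum_eD hmu y).mul_left y
  simpa [theta_zero] using
    hshift.zero_add (f := fun k : ℕ ↦ ((k : ℝ) + 2 * mu * theta k) * y ^ k / gammaD mu k)

lemma hasSum_index_sq_mul_pow_div_gammaD {mu : ℝ} (hmu : 0 ≤ mu) (y : ℝ) :
    HasSum (fun k : ℕ ↦ ((k : ℝ) + 2 * mu * theta k) ^ 2 * y ^ k / gammaD mu k)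
      (y ^ 2 * eD mu y + y * (eD mu y + 2 * mu * eD mu (-y))) := by
  have hshift : HasSum (fun k : ℕ ↦ (((k + 1 : ℕ) : ℝ) + 2 * mu * theta (k + 1)) ^ 2
      * y ^ (k + 1) / gammaD mu (k + 1)) (y * (y * eD mu y + eD mu y + 2 * mu * eD mu (-y))) := by
    rw [funext (index_sq_mul_pow_div_gammaD_succ (by linarith) y)]
    exact (((hasSum_index_mul_pow_div_gammaD hmu y).add (hasSum_eD hmu y)).add
      ((hasSum_eD hmu (-y)).mul_left (2 * mu))).mul_left y
  convert hshift.zero_add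
    (f := fun k : ℕ ↦ ((k : ℝ) + 2 * mu * theta k) ^ 2 * y ^ k / gammaD mu k) using 1
  simp only [Nat.cast_zero, theta_zero]
  ring

theorem sum_second_moment_general (mu : ℝ) (hmu : 0 ≤ mu) (y : ℝ) :
    ∑' k : ℕ, ((k : ℝ) + 2 * mu * theta k) ^ 2 * y ^ k / gammaD mu k
      = y ^ 2 * eD mu y + y * (eD mu y + 2 * mu * eD mu (-y)) :=
  (hasSum_index_sq_mul_pow_div_gammaD hmu y).tsum_eq

theorem sum_second_moment (mu : ℝ) (hmu : 0 ≤ mu) (y : ℝ) (hy : 0 ≤ y) :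
    ∑' k : ℕ, ((k : ℝ) + 2 * mu * theta k) ^ 2 * y ^ k / gammaD mu k
      = y ^ 2 * eD mu y + y * (eD mu y + 2 * mu * eD mu (-y)) :=
  sum_second_moment_general mu hmu y
end
end

section
/- For x ≥ 0, the second moment of T_n* equals T_n*(t²;x) = (n/(n+β))²(x² + 2(1 + μ e_μ(−nx)/e_μ(nx)) x/n + 1/(3n²)) + (2nα/(n+β)²)(x + 1/(2n)) + (α/(n+β))². -/
noncomputable section

namespace TnAux

lemma theta_nonneg (k : ℕ) : 0 ≤ theta k := by unfold theta; split <;> norm_num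

lemma gammaD_pos (mu : ℝ) (hmu : 0 ≤ mu) (k : ℕ) : 0 < gammaD mu k := by
  have h0 : (0:ℝ) < Real.Gamma (mu + 1/2) := Real.Gamma_pos_of_pos (by linarith)
  have hc : (0:ℝ) ≤ ((k/2 : ℕ) : ℝ) := Nat.cast_nonneg _
  unfold gammaD
  split
  · have h1 : 0 < Real.Gamma (((k/2 : ℕ) : ℝ) + mu + 1/2) :=
      Real.Gamma_pos_of_pos (by linarith)
    exact div_pos (mul_pos (mul_pos (by positivity) (by exact_mod_cast Nat.factorial_pos _)) h1) h0
  · have h1 : 0 < Real.Gamma (((k/2 : ℕ) : ℝ) + mu + 3/2) :=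
      Real.Gamma_pos_of_pos (by linarith)
    exact div_pos (mul_pos (mul_pos (by positivity) (by exact_mod_cast Nat.factorial_pos _)) h1) h0

lemma gammaD_succ (mu : ℝ) (hmu : 0 ≤ mu) (k : ℕ) :
    gammaD mu (k+1) = ((k:ℝ) + 1 + 2*mu*theta (k+1)) * gammaD mu k := by
  have h0 : Real.Gamma (mu + 1/2) ≠ 0 :=
    ne_of_gt (Real.Gamma_pos_of_pos (by linarith))
  rcases Nat.even_or_odd k with hk | hk
  · obtain ⟨m, rfl⟩ := hk
    have e1 : (m + m) / 2 = m := by omega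
    have e2 : (m + m + 1) / 2 = m := by omega
    have hev : Even (m + m) := ⟨m, rfl⟩
    have hod : ¬ Even (m + m + 1) := by simp [Nat.even_add_one, hev]
    have hG : Real.Gamma ((m:ℝ) + mu + 3/2) = ((m:ℝ) + mu + 1/2) * Real.Gamma ((m:ℝ) + mu + 1/2) := by
      have : ((m:ℝ) + mu + 3/2) = ((m:ℝ) + mu + 1/2) + 1 := by ring
      rw [this, Real.Gamma_add_one (by positivity)]
    unfold gammaD theta
    rw [if_neg hod, if_pos hev, if_neg hod, e1, e2]
    push_cast
    rw [hG]
    field_simp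
    ring
  · obtain ⟨m, rfl⟩ := hk
    have e1 : (2*m + 1) / 2 = m := by omega
    have e2 : (2*m + 1 + 1) / 2 = m + 1 := by omega
    have hod : ¬ Even (2*m + 1) := by simp [Nat.even_add_one]
    have hev : Even (2*m + 1 + 1) := by simp [Nat.even_add_one, hod]
    have hF : (Nat.factorial (m+1) : ℝ) = ((m:ℝ)+1) * Nat.factorial m := by
      rw [Nat.factorial_succ]; push_cast; ring
    have hG : ((m:ℝ)+1) + mu + 1/2 = (m:ℝ) + mu + 3/2 := by ring
    unfold gammaD theta
    rw [if_pos hev, if_neg hod, if_pos hev, e1, e2]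
    push_cast
    rw [hG, hF]
    field_simp
    ring

lemma gammaD_ge (mu : ℝ) (hmu : 0 ≤ mu) (k : ℕ) : (Nat.factorial k : ℝ) ≤ gammaD mu k := by
  induction k with
  | zero =>
    have h0 : Real.Gamma (mu + 1/2) ≠ 0 :=
      ne_of_gt (Real.Gamma_pos_of_pos (by linarith))
    unfold gammaD
    norm_num [div_self h0]
  | succ k ih =>
    rw [gammaD_succ mu hmu k, Nat.factorial_succ]
    push_cast
    have h1 : ((k:ℝ) + 1) * (Nat.factorial k : ℝ) ≤ ((k:ℝ) + 1) * gammaD mu k :=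
      mul_le_mul_of_nonneg_left ih (by positivity)
    have h2 : ((k:ℝ) + 1) * gammaD mu k ≤ ((k:ℝ) + 1 + 2*mu*theta (k+1)) * gammaD mu k := by
      apply mul_le_mul_of_nonneg_right _ (le_of_lt (gammaD_pos mu hmu k))
      have := theta_nonneg (k+1)
      nlinarith
    linarith

lemma summable_s (mu : ℝ) (hmu : 0 ≤ mu) (y : ℝ) :
    Summable (fun k : ℕ => y ^ k / gammaD mu k) := by
  apply Summable.of_abs
  refine Summable.of_nonneg_of_le (fun k => abs_nonneg _)
    (fun k => ?_) (Real.summable_pow_div_factorial |y|)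
  rw [abs_div, abs_pow, abs_of_pos (gammaD_pos mu hmu k)]
  gcongr
  exact gammaD_ge mu hmu k

lemma theta_succ (k : ℕ) : theta (k+1) = theta k + (-1)^k := by
  rcases Nat.even_or_odd k with hk | hk
  · have h2 : ¬ Even (k+1) := by simp [Nat.even_add_one, hk]
    rw [hk.neg_one_pow]
    unfold theta
    rw [if_pos hk, if_neg h2]; ring
  · have hk' : ¬ Even k := Nat.not_even_iff_odd.mpr hk
    have h2 : Even (k+1) := Nat.even_add_one.mpr hk'
    rw [hk.neg_one_pow]
    unfold theta
    rw [if_neg hk', if_pos h2]; ring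

lemma B_succ_ne (mu : ℝ) (hmu : 0 ≤ mu) (j : ℕ) : ((j:ℝ) + 1 + 2*mu*theta (j+1)) ≠ 0 := by
  have h1 : (0:ℝ) ≤ 2*mu*theta (j+1) := by
    have := theta_nonneg (j+1); positivity
  have hj : (0:ℝ) ≤ (j:ℝ) := Nat.cast_nonneg j
  linarith

lemma succ_term (mu : ℝ) (hmu : 0 ≤ mu) (y : ℝ) (j : ℕ) :
    (((j+1 : ℕ):ℝ) + 2*mu*theta (j+1)) * (y ^ (j+1) / gammaD mu (j+1))
      = y * (y ^ j / gammaD mu j) := by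
  rw [gammaD_succ mu hmu j]
  have h2 := ne_of_gt (gammaD_pos mu hmu j)
  have h3 := B_succ_ne mu hmu j
  push_cast
  field_simp
  ring

lemma succ_term2 (mu : ℝ) (hmu : 0 ≤ mu) (y : ℝ) (j : ℕ) :
    (((j+1 : ℕ):ℝ) + 2*mu*theta (j+1))^2 * (y ^ (j+1) / gammaD mu (j+1))
      = y * (((j:ℝ) + 2*mu*theta j) * (y ^ j / gammaD mu j))
        + (y * (y ^ j / gammaD mu j) + (2*mu*y) * ((-y) ^ j / gammaD mu j)) := by
  have h := succ_term mu hmu y j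
  have h2 := ne_of_gt (gammaD_pos mu hmu j)
  have hpow : (-y)^j = (-1)^j * y^j := by rw [neg_pow]
  calc (((j+1 : ℕ):ℝ) + 2*mu*theta (j+1))^2 * (y ^ (j+1) / gammaD mu (j+1))
      = (((j+1 : ℕ):ℝ) + 2*mu*theta (j+1))
          * ((((j+1 : ℕ):ℝ) + 2*mu*theta (j+1)) * (y ^ (j+1) / gammaD mu (j+1))) := by ring
    _ = (((j+1 : ℕ):ℝ) + 2*mu*theta (j+1)) * (y * (y ^ j / gammaD mu j)) := by rw [h]
    _ = _ := by
        rw [theta_succ j, hpow]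
        push_cast
        ring

lemma summable_B (mu : ℝ) (hmu : 0 ≤ mu) (y : ℝ) :
    Summable (fun k : ℕ => ((k:ℝ) + 2*mu*theta k) * (y ^ k / gammaD mu k)) := by
  apply (summable_nat_add_iff 1).mp
  have h : (fun j : ℕ => (((j+1 : ℕ):ℝ) + 2*mu*theta (j+1)) * (y ^ (j+1) / gammaD mu (j+1)))
      = fun j : ℕ => y * (y ^ j / gammaD mu j) := funext (succ_term mu hmu y)
  rw [h]
  exact (summable_s mu hmu y).mul_left y

lemma summable_B2 (mu : ℝ) (hmu : 0 ≤ mu) (y : ℝ) :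
    Summable (fun k : ℕ => ((k:ℝ) + 2*mu*theta k)^2 * (y ^ k / gammaD mu k)) := by
  apply (summable_nat_add_iff 1).mp
  have h : (fun j : ℕ => (((j+1 : ℕ):ℝ) + 2*mu*theta (j+1))^2 * (y ^ (j+1) / gammaD mu (j+1)))
      = fun j : ℕ => y * (((j:ℝ) + 2*mu*theta j) * (y ^ j / gammaD mu j))
        + (y * (y ^ j / gammaD mu j) + (2*mu*y) * ((-y) ^ j / gammaD mu j)) :=
    funext (succ_term2 mu hmu y)
  rw [h]
  exact ((summable_B mu hmu y).mul_left y).add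
    (((summable_s mu hmu y).mul_left y).add ((summable_s mu hmu (-y)).mul_left (2*mu*y)))

lemma tsum_B (mu : ℝ) (hmu : 0 ≤ mu) (y : ℝ) :
    ∑' k : ℕ, ((k:ℝ) + 2*mu*theta k) * (y ^ k / gammaD mu k) = y * eD mu y := by
  rw [Summable.tsum_eq_zero_add (summable_B mu hmu y)]
  have h0 : ((0:ℕ):ℝ) + 2*mu*theta 0 = 0 := by unfold theta; norm_num
  rw [h0, zero_mul, zero_add, tsum_congr (succ_term mu hmu y), tsum_mul_left]
  rfl

lemma tsum_B2 (mu : ℝ) (hmu : 0 ≤ mu) (y : ℝ) :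
    ∑' k : ℕ, ((k:ℝ) + 2*mu*theta k)^2 * (y ^ k / gammaD mu k)
      = y * (y * eD mu y) + (y * eD mu y + (2*mu*y) * eD mu (-y)) := by
  rw [Summable.tsum_eq_zero_add (summable_B2 mu hmu y)]
  have h0 : (((0:ℕ):ℝ) + 2*mu*theta 0)^2 = 0 := by unfold theta; norm_num
  rw [h0, zero_mul, zero_add, tsum_congr (succ_term2 mu hmu y)]
  rw [Summable.tsum_add ((summable_B mu hmu y).mul_left y)
      (((summable_s mu hmu y).mul_left y).add ((summable_s mu hmu (-y)).mul_left (2*mu*y))),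
    Summable.tsum_add ((summable_s mu hmu y).mul_left y) ((summable_s mu hmu (-y)).mul_left (2*mu*y)),
    tsum_mul_left, tsum_mul_left, tsum_mul_left, tsum_B mu hmu y]
  rfl

lemma eD_pos (mu : ℝ) (hmu : 0 ≤ mu) (y : ℝ) (hy : 0 ≤ y) : 0 < eD mu y := by
  unfold eD
  apply Summable.tsum_pos (summable_s mu hmu y) (fun k => by
    have := gammaD_pos mu hmu k
    positivity) 0
  have h0 := gammaD_pos mu hmu 0
  positivity

end TnAux

open intervalIntegral in
lemma TnAux.integral_aux (nr a b c : ℝ) (hn : nr ≠ 0) (hnb : nr + b ≠ 0) :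
    (∫ t in (c/nr)..((c+1)/nr), ((nr*t+a)/(nr+b))^2)
      = (3*(c+a)^2 + 3*(c+a) + 1)/(3*nr*(nr+b)^2) := by
  rw [intervalIntegral.integral_comp_mul_add (fun u => (u/(nr+b))^2) hn a]
  have e1 : nr*(c/nr)+a = c+a := by field_simp
  have e2 : nr*((c+1)/nr)+a = c+1+a := by field_simp
  rw [e1, e2]
  simp only [div_pow]
  rw [intervalIntegral.integral_div, integral_pow, smul_eq_mul]
  field_simp
  ring

theorem TnStar_sq (mu a b : ℝ) (hmu : 0 ≤ mu) (ha : 0 ≤ a) (hab : a ≤ b)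
    (n : ℕ) (hn : 0 < n) (x : ℝ) (hx : 0 ≤ x) :
    TnStar mu a b n (fun t => t ^ 2) x
      = (n / (n + b)) ^ 2
          * (x ^ 2 + 2 * (1 + mu * eD mu (-(n * x)) / eD mu (n * x)) * x / n + 1 / (3 * n ^ 2))
        + (2 * n * a / (n + b) ^ 2) * (x + 1 / (2 * n))
        + (a / (n + b)) ^ 2 := by
  have hn' : ((n:ℝ)) ≠ 0 := Nat.cast_ne_zero.mpr hn.ne'
  have hnpos : (0:ℝ) < (n:ℝ) := Nat.cast_pos.mpr hn
  have hb : (0:ℝ) ≤ b := le_trans ha hab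
  have hnb : ((n:ℝ) + b) ≠ 0 := by linarith
  have hy : (0:ℝ) ≤ (n:ℝ) * x := by positivity
  have he : eD mu ((n:ℝ)*x) ≠ 0 := ne_of_gt (TnAux.eD_pos mu hmu _ hy)
  set C1 : ℝ := 1/((n:ℝ)*((n:ℝ)+b)^2) with hC1
  set C2 : ℝ := (2*a+1)/((n:ℝ)*((n:ℝ)+b)^2) with hC2
  set C3 : ℝ := (3*a^2+3*a+1)/(3*(n:ℝ)*((n:ℝ)+b)^2) with hC3
  have key : ∀ k : ℕ,
      ((n:ℝ)*x)^k/gammaD mu k * (∫ t in (((k : ℝ) + 2 * mu * theta k) / n)..(((k : ℝ) + 1 + 2 * mu * theta k) / n), (fun t => t^2) (((n:ℝ) * t + a) / ((n:ℝ) + b)))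
        = C1 * (((k:ℝ) + 2*mu*theta k)^2 * (((n:ℝ)*x)^k / gammaD mu k))
          + (C2 * (((k:ℝ) + 2*mu*theta k) * (((n:ℝ)*x)^k / gammaD mu k))
            + C3 * (((n:ℝ)*x)^k / gammaD mu k)) := by
    intro k
    have hb2 : (k:ℝ) + 1 + 2*mu*theta k = ((k:ℝ) + 2*mu*theta k) + 1 := by ring
    rw [hb2]
    show ((n:ℝ)*x)^k/gammaD mu k *
        (∫ t in (((k : ℝ) + 2 * mu * theta k) / n)..((((k : ℝ) + 2 * mu * theta k) + 1) / n),
          (((n:ℝ) * t + a) / ((n:ℝ) + b))^2) = _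
    rw [TnAux.integral_aux (n:ℝ) a b ((k:ℝ) + 2*mu*theta k) hn' hnb]
    rw [hC1, hC2, hC3]
    have hg := ne_of_gt (TnAux.gammaD_pos mu hmu k)
    field_simp
    ring
  unfold TnStar
  rw [tsum_congr key]
  have s0 := TnAux.summable_s mu hmu ((n:ℝ)*x)
  have s1 := TnAux.summable_B mu hmu ((n:ℝ)*x)
  have s2 := TnAux.summable_B2 mu hmu ((n:ℝ)*x)
  rw [Summable.tsum_add (s2.mul_left C1) ((s1.mul_left C2).add (s0.mul_left C3)),
    Summable.tsum_add (s1.mul_left C2) (s0.mul_left C3),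
    tsum_mul_left, tsum_mul_left, tsum_mul_left,
    TnAux.tsum_B mu hmu ((n:ℝ)*x), TnAux.tsum_B2 mu hmu ((n:ℝ)*x)]
  have hE : ∑' k : ℕ, ((n:ℝ)*x)^k / gammaD mu k = eD mu ((n:ℝ)*x) := rfl
  rw [hE, hC1, hC2, hC3]
  field_simp
  ring
end
end

section
/- For α = β = 0, μ ≥ 0, n ∈ ℕ, and x ≥ 1/2, the second central moment of the modified operator is bounded by that of the unmodified one: (1 + 2μ e_μ(−n r_n(x))/e_μ(n r_n(x))) x/n − (1/n²)(5/12 + μ e_μ(−n r_n(x))/e_μ(n r_n(x))) ≤ (1 + 2μ e_μ(−nx)/e_μ(nx)) x/n + 1/(3n²). -/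
noncomputable section

/-!
With `y = n x` and `R y = e_μ(-y) / e_μ(y)`, the right side minus the left side equals
`(k y - k (y - 1/2)) / n²` for `k y = 2 μ y R y + 3 y / 2`, so it suffices that `k` is monotone
on `[0, ∞)`. Since `y e_μ'(y) = y e_μ(y) - μ (e_μ(y) - e_μ(-y))`, the function `R` solves the
Riccati equation `y R' = -2 y R + μ (1 - R²)`, and `k' ≥ 0` says that `R` lies below the positive
root `ρ` of a quadratic. That root is a strict supersolution of the Riccati equation with
`ρ 0 > 1 = R 0`, so `R ≤ ρ` follows by comparison.
-/

namespace Dunkl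

open Set

lemma theta_nonneg (k : ℕ) : 0 ≤ theta k := by
  unfold theta; split <;> norm_num

lemma gammaD_pos {mu : ℝ} (hmu : -1 / 2 < mu) (k : ℕ) : 0 < gammaD mu k := by
  have h₁ : 0 < Real.Gamma (mu + 1 / 2) := Real.Gamma_pos_of_pos (by linarith)
  have hk : (0 : ℝ) ≤ (k / 2 : ℕ) := Nat.cast_nonneg _
  have h₂ : 0 < Real.Gamma ((k / 2 : ℕ) + mu + 1 / 2) := Real.Gamma_pos_of_pos (by linarith)
  have h₃ : 0 < Real.Gamma ((k / 2 : ℕ) + mu + 3 / 2) := Real.Gamma_pos_of_pos (by linarith)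
  unfold gammaD
  split <;> positivity

lemma gammaD_zero {mu : ℝ} (hmu : -1 / 2 < mu) : gammaD mu 0 = 1 := by
  have h : Real.Gamma (mu + 1 / 2) ≠ 0 := (Real.Gamma_pos_of_pos (by linarith)).ne'
  simp only [gammaD, if_pos Even.zero]
  simpa using div_self h

lemma gammaD_succ {mu : ℝ} (hmu : -1 / 2 < mu) (k : ℕ) :
    gammaD mu (k + 1) = gammaD mu k * (k + 1 + 2 * mu * theta (k + 1)) := by
  have h : Real.Gamma (mu + 1 / 2) ≠ 0 := (Real.Gamma_pos_of_pos (by linarith)).ne'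
  rcases Nat.even_or_odd' k with ⟨j, rfl | rfl⟩
  · have hodd : ¬ Even (2 * j + 1) := by simp
    have hdiv : (2 * j + 1) / 2 = j := by omega
    have hΓ : Real.Gamma (j + mu + 3 / 2) = (j + mu + 1 / 2) * Real.Gamma (j + mu + 1 / 2) := by
      rw [← Real.Gamma_add_one (by linarith [(Nat.cast_nonneg j : (0 : ℝ) ≤ j)])]; ring_nf
    simp only [gammaD, theta, if_neg hodd, if_pos (even_two_mul j), hdiv,
      Nat.mul_div_cancel_left j two_pos, hΓ]
    push_cast
    field_simp
    ring
  · have hodd : ¬ Even (2 * j + 1) := by simp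
    have heven : Even (2 * j + 1 + 1) := ⟨j + 1, by omega⟩
    have hdiv₁ : (2 * j + 1 + 1) / 2 = j + 1 := by omega
    have hdiv₀ : (2 * j + 1) / 2 = j := by omega
    have harg : ((j + 1 : ℕ) : ℝ) + mu + 1 / 2 = j + mu + 3 / 2 := by push_cast; ring
    simp only [gammaD, theta, if_neg hodd, if_pos heven, hdiv₁, hdiv₀, Nat.factorial_succ, harg]
    push_cast
    field_simp
    ring

lemma factorial_le_gammaD {mu : ℝ} (hmu : 0 ≤ mu) (k : ℕ) : (k.factorial : ℝ) ≤ gammaD mu k := by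
  induction k with
  | zero => simp [gammaD_zero (by linarith : -1 / 2 < mu)]
  | succ k ih =>
    rw [gammaD_succ (by linarith) k, Nat.factorial_succ, Nat.cast_mul, mul_comm]
    have := theta_nonneg (k + 1)
    gcongr
    · exact (gammaD_pos (by linarith) k).le
    · push_cast; nlinarith

lemma summable_pow_div_gammaD {mu : ℝ} (hmu : 0 ≤ mu) (y : ℝ) :
    Summable (fun k : ℕ => y ^ k / gammaD mu k) := by
  refine .of_norm_bounded (Real.summable_pow_div_factorial |y|) fun k => ?_
  rw [Real.norm_eq_abs, abs_div, abs_pow, abs_of_pos (gammaD_pos (by linarith) k)]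
  exact div_le_div_of_nonneg_left (by positivity) (by positivity) (factorial_le_gammaD hmu k)

lemma hasSum_eD {mu : ℝ} (hmu : 0 ≤ mu) (y : ℝ) :
    HasSum (fun k : ℕ => y ^ k / gammaD mu k) (eD mu y) :=
  (summable_pow_div_gammaD hmu y).hasSum

lemma summable_nat_mul_pow_pred_div_factorial (r : ℝ) :
    Summable (fun k : ℕ => k * r ^ (k - 1) / k.factorial) := by
  rw [← summable_nat_add_iff 1]
  refine (Real.summable_pow_div_factorial r).congr fun k => ?_
  rw [Nat.factorial_succ]
  push_cast
  field_simp

def eDDeriv (mu y : ℝ) : ℝ := ∑' k : ℕ, k * y ^ (k - 1) / gammaD mu k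

lemma hasDerivAt_eD {mu : ℝ} (hmu : 0 ≤ mu) (y : ℝ) : HasDerivAt (eD mu) (eDDeriv mu y) y := by
  have hy : y ∈ Metric.ball (0 : ℝ) (|y| + 1) := by simp
  refine hasDerivAt_tsum_of_isPreconnected (g := fun k z => z ^ k / gammaD mu k)
    (g' := fun k z => k * z ^ (k - 1) / gammaD mu k)
    (summable_nat_mul_pow_pred_div_factorial (|y| + 1)) Metric.isOpen_ball
    (convex_ball 0 _).isPreconnected (fun k z _ => (hasDerivAt_pow k z).div_const _)
    (fun k z hz => ?_) hy (summable_pow_div_gammaD hmu y) hy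
  have hz : |z| ≤ |y| + 1 := by simpa using (Metric.mem_ball.mp hz).le
  rw [Real.norm_eq_abs, abs_div, abs_of_pos (gammaD_pos (by linarith) k), abs_mul, abs_pow,
    Nat.abs_cast]
  gcongr
  exact factorial_le_gammaD hmu k

lemma hasDerivAt_eD_neg {mu : ℝ} (hmu : 0 ≤ mu) (y : ℝ) :
    HasDerivAt (fun z => eD mu (-z)) (-eDDeriv mu (-y)) y :=
  ((hasDerivAt_eD hmu (-y)).comp y (hasDerivAt_neg' y)).congr_deriv (mul_neg_one _)

lemma hasSum_mul_eD {mu : ℝ} (hmu : 0 ≤ mu) (y : ℝ) :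
    HasSum (fun k : ℕ => (k + 2 * mu * theta k) * y ^ k / gammaD mu k) (y * eD mu y) := by
  have hzero : ((0 : ℕ) + 2 * mu * theta 0) * y ^ 0 / gammaD mu 0 = 0 := by simp [theta]
  rw [← hasSum_nat_add_iff' 1, Finset.sum_range_one, hzero, sub_zero]
  refine ((hasSum_eD hmu y).mul_left y).congr_fun fun k => ?_
  have := theta_nonneg (k + 1)
  have : (0 : ℝ) < k + 1 + 2 * mu * theta (k + 1) := by positivity
  have := gammaD_pos (by linarith : -1 / 2 < mu) k
  rw [gammaD_succ (by linarith) k]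
  push_cast
  field_simp
  ring

lemma hasSum_eD_sub_eD_neg {mu : ℝ} (hmu : 0 ≤ mu) (y : ℝ) :
    HasSum (fun k : ℕ => 2 * theta k * y ^ k / gammaD mu k) (eD mu y - eD mu (-y)) := by
  refine ((hasSum_eD hmu y).sub (hasSum_eD hmu (-y))).congr_fun fun k => ?_
  rcases Nat.even_or_odd k with hk | hk
  · simp [theta, hk, hk.neg_pow]
  · simp [theta, Nat.not_even_iff_odd.mpr hk, hk.neg_pow]
    ring

lemma mul_eDDeriv {mu : ℝ} (hmu : 0 ≤ mu) (y : ℝ) :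
    y * eDDeriv mu y = y * eD mu y - mu * (eD mu y - eD mu (-y)) := by
  rw [eDDeriv, ← tsum_mul_left, ← ((hasSum_mul_eD hmu y).sub
    ((hasSum_eD_sub_eD_neg hmu y).mul_left mu)).tsum_eq]
  congr 1
  funext k
  rcases k with _ | k
  · simp [theta]
  · simp only [Nat.add_sub_cancel, pow_succ]
    ring

lemma mul_eDDeriv_neg {mu : ℝ} (hmu : 0 ≤ mu) (y : ℝ) :
    y * eDDeriv mu (-y) = y * eD mu (-y) + mu * (eD mu (-y) - eD mu y) := by
  linear_combination (-1 : ℝ) * (by simpa using mul_eDDeriv hmu (-y) :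
    -y * eDDeriv mu (-y) = -y * eD mu (-y) - mu * (eD mu (-y) - eD mu y))

lemma eD_zero {mu : ℝ} (hmu : 0 ≤ mu) : eD mu 0 = 1 := by
  rw [(hasSum_eD hmu 0).tsum_eq.symm.trans (tsum_eq_single 0 fun k hk => by simp [hk])]
  simp [gammaD_zero (by linarith : -1 / 2 < mu)]

lemma one_le_eD {mu : ℝ} (hmu : 0 ≤ mu) {y : ℝ} (hy : 0 ≤ y) : 1 ≤ eD mu y := by
  have h := (summable_pow_div_gammaD hmu y).le_tsum 0 fun k _ =>
    div_nonneg (pow_nonneg hy k) (gammaD_pos (by linarith) k).le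
  simp only [pow_zero, gammaD_zero (by linarith : -1 / 2 < mu), div_one] at h
  exact h

lemma eD_pos {mu : ℝ} (hmu : 0 ≤ mu) {y : ℝ} (hy : 0 ≤ y) : 0 < eD mu y :=
  one_pos.trans_le (one_le_eD hmu hy)

/-- `z (e(z) e(-z))' = μ (e(z) - e(-z))²`, so the product increases from its value `1` at `0`. -/
lemma one_le_eD_mul_eD_neg {mu : ℝ} (hmu : 0 ≤ mu) {y : ℝ} (hy : 0 ≤ y) :
    1 ≤ eD mu y * eD mu (-y) := by
  have hderiv (z : ℝ) : HasDerivAt (fun z => eD mu z * eD mu (-z))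
      (eDDeriv mu z * eD mu (-z) + eD mu z * -eDDeriv mu (-z)) z :=
    (hasDerivAt_eD hmu z).mul (hasDerivAt_eD_neg hmu z)
  have hmono : MonotoneOn (fun z => eD mu z * eD mu (-z)) (Ici 0) := by
    refine monotoneOn_of_hasDerivWithinAt_nonneg (convex_Ici 0)
      (fun z _ => (hderiv z).continuousAt.continuousWithinAt)
      (fun z _ => (hderiv z).hasDerivWithinAt) fun z hz => ?_
    rw [interior_Ici, mem_Ioi] at hz
    have hsq : z * (eDDeriv mu z * eD mu (-z) + eD mu z * -eDDeriv mu (-z))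
        = mu * (eD mu z - eD mu (-z)) ^ 2 := by
      linear_combination eD mu (-z) * mul_eDDeriv hmu z - eD mu z * mul_eDDeriv_neg hmu z
    exact nonneg_of_mul_nonneg_right (hsq ▸ by positivity) hz
  simpa [eD_zero hmu] using hmono self_mem_Ici hy hy

lemma eD_neg_pos {mu : ℝ} (hmu : 0 ≤ mu) {y : ℝ} (hy : 0 ≤ y) : 0 < eD mu (-y) :=
  pos_of_mul_pos_right (one_pos.trans_le (one_le_eD_mul_eD_neg hmu hy)) (eD_pos hmu hy).le

def ratioDisc (mu y : ℝ) : ℝ := √((2 * y - 1) ^ 2 + 4 * mu ^ 2 + 3)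

/-- The positive root in `R` of `μ R² + (2y - 1) R - μ - 3/(4μ)`. -/
def ratioBound (mu y : ℝ) : ℝ := (ratioDisc mu y - (2 * y - 1)) / (2 * mu)

lemma ratioDisc_pos (mu y : ℝ) : 0 < ratioDisc mu y := Real.sqrt_pos.mpr (by positivity)

lemma sq_ratioDisc (mu y : ℝ) : ratioDisc mu y ^ 2 = (2 * y - 1) ^ 2 + 4 * mu ^ 2 + 3 :=
  Real.sq_sqrt (by positivity)

lemma hasDerivAt_ratioBound (mu y : ℝ) :
    HasDerivAt (ratioBound mu) (-2 * ratioBound mu y / ratioDisc mu y) y := by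
  have hlin : HasDerivAt (fun z : ℝ => 2 * z - 1) 2 y := by
    simpa using ((hasDerivAt_id y).const_mul 2).sub_const 1
  have hdisc : HasDerivAt (ratioDisc mu) (2 * (2 * y - 1) * 2 / (2 * ratioDisc mu y)) y := by
    have h := ((hlin.pow 2).add_const (4 * mu ^ 2 + 3)).sqrt
      (by positivity : (2 * y - 1) ^ 2 + (4 * mu ^ 2 + 3) ≠ 0)
    simp only [Pi.pow_apply, ← add_assoc] at h
    convert h using 1
    · rfl
    · norm_num [ratioDisc]
  refine ((hdisc.sub hlin).div_const (2 * mu)).congr_deriv ?_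
  have := (ratioDisc_pos mu y).ne'
  unfold ratioBound
  field_simp
  ring

lemma two_mul_mul_ratioBound {mu : ℝ} (hmu : mu ≠ 0) (y : ℝ) :
    2 * mu * ratioBound mu y = ratioDisc mu y - (2 * y - 1) := by
  unfold ratioBound
  field_simp

lemma one_lt_ratioBound_zero {mu : ℝ} (hmu : 0 < mu) : 1 < ratioBound mu 0 := by
  have hdisc : 2 * mu < ratioDisc mu 0 := by
    rw [ratioDisc, Real.lt_sqrt (by positivity)]
    nlinarith
  have := two_mul_mul_ratioBound hmu.ne' 0
  nlinarith

/-- `ratioBound` is a strict supersolution of the Riccati equation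
`y R' = -2 y R + μ (1 - R²)` satisfied by `R y = e(-y)/e(y)`. -/
lemma ratioBound_supersolution {mu y : ℝ} (hmu : 0 < mu) (hy : 0 < y) :
    0 < y * (-2 * ratioBound mu y / ratioDisc mu y) + 2 * y * ratioBound mu y
      - mu * (1 - ratioBound mu y ^ 2) := by
  have hs := ratioDisc_pos mu y
  have hs2 := sq_ratioDisc mu y
  have hρ := two_mul_mul_ratioBound hmu.ne' y
  set s := ratioDisc mu y
  set ρ := ratioBound mu y
  set c := 2 * y - 1
  have hsc : 0 < 2 * (s - c) ^ 2 + s + 2 * c := by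
    rcases le_or_gt 0 c with hc | hc
    · positivity
    · nlinarith
  have hid : (y * (-2 * ρ / s) + 2 * y * ρ - mu * (1 - ρ ^ 2)) * (4 * mu * s)
      = 2 * (s - c) ^ 2 + s + 2 * c := by
    field_simp
    linear_combination (4 * y * s - 4 * y + s * (2 * mu * ρ + s - c)) * hρ + s * hs2
  exact pos_of_mul_pos_left (hid ▸ hsc) (by positivity)

lemma eD_neg_le_ratioBound_mul_eD {mu y : ℝ} (hmu : 0 < mu) (hy : 0 ≤ y) :
    eD mu (-y) ≤ ratioBound mu y * eD mu y := by
  have hmu' := hmu.le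
  have hρ₀ := one_lt_ratioBound_zero hmu
  refine image_le_of_deriv_right_lt_deriv_boundary (a := 0) (f' := fun z => -eDDeriv mu (-z))
    (B' := fun z => -2 * ratioBound mu z / ratioDisc mu z * eD mu z
      + ratioBound mu z * eDDeriv mu z)
    (fun z _ => (hasDerivAt_eD_neg hmu' z).continuousAt.continuousWithinAt)
    (fun z _ => (hasDerivAt_eD_neg hmu' z).hasDerivWithinAt) (by simp [eD_zero hmu', hρ₀.le])
    (fun z => (hasDerivAt_ratioBound mu z).mul (hasDerivAt_eD hmu' z)) ?_ ⟨hy, le_rfl⟩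
  rintro z ⟨hz, -⟩ (heq : eD mu (-z) = ratioBound mu z * eD mu z)
  rcases hz.eq_or_lt with rfl | hz
  · simp only [neg_zero, eD_zero hmu', mul_one] at heq
    linarith
  · have hgap : z * (-2 * ratioBound mu z / ratioDisc mu z * eD mu z
        + ratioBound mu z * eDDeriv mu z - -eDDeriv mu (-z))
        = eD mu z * (z * (-2 * ratioBound mu z / ratioDisc mu z) + 2 * z * ratioBound mu z
          - mu * (1 - ratioBound mu z ^ 2)) := by
      linear_combination ratioBound mu z * mul_eDDeriv hmu' z + mul_eDDeriv_neg hmu' z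
        + (z + mu + mu * ratioBound mu z) * heq
    have := mul_pos (eD_pos hmu' hz.le) (ratioBound_supersolution hmu hz)
    rw [← hgap] at this
    exact sub_pos.mp (pos_of_mul_pos_right this hz.le)

lemma riccati_nonneg_of_le_ratioBound {mu z R : ℝ} (hmu : 0 < mu) (hR₀ : 0 ≤ R)
    (hR : R ≤ ratioBound mu z) :
    0 ≤ 2 * mu * (R * (1 - 2 * z) + mu * (1 - R ^ 2)) + 3 / 2 := by
  have hs := ratioDisc_pos mu z
  have hs2 := sq_ratioDisc mu z
  have hρ := two_mul_mul_ratioBound hmu.ne' z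
  set s := ratioDisc mu z
  set c := 2 * z - 1
  have hc : |c| < s := by
    rw [← abs_of_pos hs]
    exact sq_lt_sq.mp (by nlinarith)
  have h₁ : 0 ≤ s - c - 2 * mu * R := by nlinarith
  have h₂ : 0 ≤ s + c + 2 * mu * R := by nlinarith [neg_abs_le c]
  nlinarith [mul_nonneg h₁ h₂]

lemma hasDerivAt_mul_eD_ratio {mu z : ℝ} (hmu : 0 ≤ mu) (hz : 0 ≤ z) :
    HasDerivAt (fun w => w * (eD mu (-w) / eD mu w))
      (eD mu (-z) / eD mu z * (1 - 2 * z) + mu * (1 - (eD mu (-z) / eD mu z) ^ 2)) z := by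
  have hF := (eD_pos hmu hz).ne'
  refine ((hasDerivAt_id z).mul ((hasDerivAt_eD_neg hmu z).div (hasDerivAt_eD hmu z) hF))
    |>.congr_deriv ?_
  simp only [Pi.div_apply, id]
  field_simp
  linear_combination (-eD mu z) * mul_eDDeriv_neg hmu z - eD mu (-z) * mul_eDDeriv hmu z

lemma monotoneOn_mul_eD_ratio {mu : ℝ} (hmu : 0 ≤ mu) :
    MonotoneOn (fun z => 2 * mu * (z * (eD mu (-z) / eD mu z)) + 3 / 2 * z) (Ici 0) := by
  have hderiv {z : ℝ} (hz : 0 ≤ z) := ((hasDerivAt_mul_eD_ratio hmu hz).const_mul (2 * mu)).add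
    ((hasDerivAt_id z).const_mul (3 / 2))
  refine monotoneOn_of_hasDerivWithinAt_nonneg (convex_Ici 0)
    (fun z hz => (hderiv hz).continuousAt.continuousWithinAt)
    (fun z hz => (hderiv (interior_subset hz)).hasDerivWithinAt) fun z hz => ?_
  rw [interior_Ici, mem_Ioi] at hz
  have hF := eD_pos hmu hz.le
  have hR₀ : 0 ≤ eD mu (-z) / eD mu z := (div_pos (eD_neg_pos hmu hz.le) hF).le
  rcases hmu.eq_or_lt with rfl | hmu
  · norm_num
  · have hR : eD mu (-z) / eD mu z ≤ ratioBound mu z :=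
      (div_le_iff₀ hF).mpr (eD_neg_le_ratioBound_mul_eD hmu hz.le)
    simpa [mul_add] using riccati_nonneg_of_le_ratioBound hmu hR₀ hR

end Dunkl

theorem Kn_le_Tn_central_second_general (mu : ℝ) (hmu : 0 ≤ mu) (n : ℕ) (hn : 0 < n)
    (x : ℝ) (hx : 1 / 2 ≤ x) :
    (1 + 2 * mu * eD mu (-(n * rn n x)) / eD mu (n * rn n x)) * x / n
        - (1 / n ^ 2) * (5 / 12 + mu * eD mu (-(n * rn n x)) / eD mu (n * rn n x))
      ≤ (1 + 2 * mu * eD mu (-(n * x)) / eD mu (n * x)) * x / n + 1 / (3 * n ^ 2) := by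
  have hN : (1 : ℝ) ≤ n := Nat.one_le_cast.mpr hn
  have hrn : (n : ℝ) * rn n x = n * x - 1 / 2 := by
    unfold rn
    field_simp
  have hmono := Dunkl.monotoneOn_mul_eD_ratio hmu (a := n * x - 1 / 2) (b := n * x)
    (Set.mem_Ici.mpr (by nlinarith)) (Set.mem_Ici.mpr (by nlinarith)) (by linarith)
  rw [hrn]
  set R₁ := eD mu (-(n * x - 1 / 2)) / eD mu (n * x - 1 / 2)
  set R₂ := eD mu (-(n * x)) / eD mu (n * x)
  simp only at hmono
  have hgap : (1 + 2 * mu * R₂) * x / n + 1 / (3 * n ^ 2)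
      - ((1 + 2 * mu * R₁) * x / n - 1 / n ^ 2 * (5 / 12 + mu * R₁))
      = (2 * mu * (n * x * R₂) + 3 / 2 * (n * x)
        - (2 * mu * ((n * x - 1 / 2) * R₁) + 3 / 2 * (n * x - 1 / 2))) / n ^ 2 := by
    field_simp
    ring
  have := div_nonneg (sub_nonneg.mpr hmono) (sq_nonneg (n : ℝ))
  rw [← hgap, sub_nonneg] at this
  simpa only [mul_div_assoc] using this

theorem Kn_le_Tn_central_second (mu : ℝ) (hmu : 0 ≤ mu) (n : ℕ) (hn : 0 < n)
    (x : ℝ) (hx : 1 / 2 ≤ x)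
    (hratio : ∀ y : ℝ, 0 < y → eD mu (-y) / eD mu y ∈ Set.Icc (-1 : ℝ) 1) :
    (1 + 2 * mu * eD mu (-(n * rn n x)) / eD mu (n * rn n x)) * x / n
        - (1 / n ^ 2) * (5 / 12 + mu * eD mu (-(n * rn n x)) / eD mu (n * rn n x))
      ≤ (1 + 2 * mu * eD mu (-(n * x)) / eD mu (n * x)) * x / n + 1 / (3 * n ^ 2) :=
  Kn_le_Tn_central_second_general mu hmu n hn x hx
end
end
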